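/- arXiv:math/0012192 — 3 statements merged into one kernel-verified Lean document; each statement's English description precedes it below -/
import Mathlib

section
/- Let p be a prime and let G be a transitive subgroup of Sym(Z_p × Z_p). The following are equivalent: (1) G ≤ S_p × S_p, i.e., every element of G has the form (i,j) ↦ (σ(i), τ(j)) with σ, τ ∈ Sym(Z_p); (2) there are transitive subgroups H and K of Sym(Z_p) such that H × K ≤ G ≤ N_{Sym(Z_p)}(H) × N_{Sym(Z_p)}(K); (3) there are transitive subgroups H and K of Sym(Z_p) and a group homomorphism f: H → N_{Sym(Z_p)}(K)/K such that G = {(σ, τ) ∈ H × N_{Sym(Z_p)}(K) : f(σ) = τK}. -/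
open Equiv

namespace Paper

variable {α : Type*} (p : ℕ)

/-- `G` is a transitive subgroup of `Perm α`. -/
def IsTransSub (G : Subgroup (Equiv.Perm α)) : Prop :=
  ∀ x y : α, ∃ g ∈ G, g x = y

/-- The coordinatewise-action homomorphism `S_p × S_p →* Sym(Z_p × Z_p)`. -/
def pch (p : ℕ) : Perm (ZMod p) × Perm (ZMod p) →* Perm (ZMod p × ZMod p) where
  toFun m := Equiv.prodCongr m.1 m.2
  map_one' := Equiv.ext fun _ => rfl
  map_mul' _ _ := Equiv.ext fun _ => rfl

lemma trans_of_pdvd (p : ℕ) [Fact p.Prime] (A : Subgroup (Perm (ZMod p)))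
    (h : p ∣ Nat.card A) : IsTransSub A := by
  classical
  have hp : p.Prime := Fact.out
  haveI : NeZero p := ⟨hp.ne_zero⟩
  haveI : Fintype ↥A := Fintype.ofFinite _
  rw [Nat.card_eq_fintype_card] at h
  obtain ⟨a, ha⟩ := exists_prime_orderOf_dvd_card p h
  set σ : Perm (ZMod p) := (a : Perm (ZMod p)) with hσ
  have hoσ : orderOf σ = p :=
    (orderOf_injective A.subtype A.subtype_injective a).trans ha
  have hcard : Fintype.card (ZMod p) = p := ZMod.card p
  have hc : σ.IsCycle :=
    Perm.isCycle_of_prime_order'' (by rw [hcard]; exact hp) (by rw [hoσ, hcard])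
  have hsupp : σ.support = Finset.univ := by
    apply Finset.eq_univ_of_card
    rw [← hc.orderOf, hoσ, hcard]
  intro x y
  obtain ⟨z, hz, hall⟩ := hc
  have hx : σ x ≠ x := by rw [← Perm.mem_support, hsupp]; exact Finset.mem_univ x
  have hy : σ y ≠ y := by rw [← Perm.mem_support, hsupp]; exact Finset.mem_univ y
  obtain ⟨k, hk⟩ := (hall hx).symm.trans (hall hy)
  exact ⟨↑(a ^ k), (a ^ k).2, by rw [SubgroupClass.coe_zpow]; exact hk⟩

lemma pdvd_ker {G' H' : Type*} [Group G'] [Group H'] [Finite G'] (p : ℕ) (hp : p.Prime)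
    (f : G' →* H') (h2 : p * p ∣ Nat.card G') (hr : ¬ p * p ∣ Nat.card f.range) :
    p ∣ Nat.card f.ker := by
  have hcard : Nat.card G' = Nat.card f.range * Nat.card f.ker := by
    rw [Subgroup.card_eq_card_quotient_mul_card_subgroup f.ker,
      Nat.card_congr (QuotientGroup.quotientKerEquivRange f).toEquiv]
  by_contra h
  have hcop : (p * p).Coprime (Nat.card f.ker) := by
    have := (Nat.Prime.coprime_iff_not_dvd hp).mpr h
    exact Nat.Coprime.mul this this
  exact hr (hcop.dvd_of_dvd_mul_right (hcard ▸ h2))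

lemma not_ppdvd_fact (p : ℕ) (hp : p.Prime) : ¬ p * p ∣ p.factorial := by
  intro hdvd
  obtain ⟨q, rfl⟩ : ∃ q, p = q + 1 := ⟨p - 1, (Nat.succ_pred_eq_of_pos hp.pos).symm⟩
  rw [Nat.factorial_succ] at hdvd
  have h2 : q + 1 ∣ q.factorial := (Nat.mul_dvd_mul_iff_left hp.pos).mp hdvd
  have := (Nat.Prime.dvd_factorial hp).mp h2
  omega

lemma forward (p : ℕ) [Fact p.Prime]
    (G : Subgroup (Equiv.Perm (ZMod p × ZMod p))) (hG : IsTransSub G)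
    (h1 : ∀ g ∈ G, ∃ σ τ : Equiv.Perm (ZMod p), ∀ x : ZMod p × ZMod p, g x = (σ x.1, τ x.2)) :
    (∃ H K : Subgroup (Equiv.Perm (ZMod p)), IsTransSub H ∧ IsTransSub K ∧
        (∀ σ ∈ H, ∀ τ ∈ K, Equiv.prodCongr σ τ ∈ G) ∧
        (∀ g ∈ G, ∃ σ ∈ (Subgroup.normalizer (H : Set (Equiv.Perm (ZMod p)))), ∃ τ ∈ (Subgroup.normalizer (K : Set (Equiv.Perm (ZMod p)))), g = Equiv.prodCongr σ τ)) ∧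
    (∃ H K : Subgroup (Equiv.Perm (ZMod p)), IsTransSub H ∧ IsTransSub K ∧
        ∃ f : H →* (↥(Subgroup.normalizer (K : Set (Equiv.Perm (ZMod p)))) ⧸ K.subgroupOf (Subgroup.normalizer (K : Set (Equiv.Perm (ZMod p))))),
          ∀ g : Equiv.Perm (ZMod p × ZMod p), g ∈ G ↔
            ∃ (σ : H) (τ : (Subgroup.normalizer (K : Set (Equiv.Perm (ZMod p))))),
              g = Equiv.prodCongr (σ : Equiv.Perm (ZMod p)) (τ : Equiv.Perm (ZMod p)) ∧
              f σ = QuotientGroup.mk τ) := by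
  classical
  have hp : p.Prime := Fact.out
  haveI : NeZero p := ⟨hp.ne_zero⟩
  set M : Subgroup (Perm (ZMod p) × Perm (ZMod p)) := G.comap (pch p) with hM
  -- every element of G comes from M
  have hGM : ∀ g ∈ G, ∃ m ∈ M, pch p m = g := by
    intro g hg
    obtain ⟨σ, τ, h⟩ := h1 g hg
    have he : pch p (σ, τ) = g := Equiv.ext fun x => (h x).symm
    exact ⟨(σ, τ), by rw [Subgroup.mem_comap, he]; exact hg, he⟩
  set A : Subgroup (Perm (ZMod p)) := M.comap (MonoidHom.inl _ _) with hA
  set B : Subgroup (Perm (ZMod p)) := M.comap (MonoidHom.inr _ _) with hB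
  have memA : ∀ σ : Perm (ZMod p), σ ∈ A ↔ (σ, (1 : Perm (ZMod p))) ∈ M := fun σ => Iff.rfl
  have memB : ∀ τ : Perm (ZMod p), τ ∈ B ↔ ((1 : Perm (ZMod p)), τ) ∈ M := fun τ => Iff.rfl
  -- injectivity of pch
  have hinj : Function.Injective (pch p) := by
    intro a b h
    have hx := Equiv.ext_iff.mp h
    have ha1 : a.1 = b.1 := Equiv.ext fun i => congrArg Prod.fst (hx (i, 0))
    have ha2 : a.2 = b.2 := Equiv.ext fun j => congrArg Prod.snd (hx (0, j))
    exact Prod.ext ha1 ha2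
  have hMG : Subgroup.map (pch p) M = G := by
    apply le_antisymm (Subgroup.map_comap_le _ _)
    intro g hg
    obtain ⟨m, hm, he⟩ := hGM g hg
    exact ⟨m, hm, he⟩
  -- p² divides |G| = |M|
  have horbit : p * p ∣ Nat.card G := by
    have horb : MulAction.orbit G ((0, 0) : ZMod p × ZMod p) = Set.univ :=
      Set.eq_univ_of_forall fun y => by
        obtain ⟨g, hgG, hgx⟩ := hG (0, 0) y
        exact ⟨⟨g, hgG⟩, hgx⟩
    have hc1 : Nat.card (ZMod p × ZMod p) = p * p := by
      rw [Nat.card_prod, Nat.card_zmod]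
    have hc2 : Nat.card (ZMod p × ZMod p) =
        Nat.card (G ⧸ MulAction.stabilizer G ((0, 0) : ZMod p × ZMod p)) := by
      rw [← Nat.card_congr (MulAction.orbitEquivQuotientStabilizer G ((0, 0) : ZMod p × ZMod p)),
        horb]
      exact (Nat.card_congr (Equiv.Set.univ _)).symm
    rw [← hc1, hc2]
    exact ⟨_, Subgroup.card_eq_card_quotient_mul_card_subgroup _⟩
  have hcardMG : Nat.card M = Nat.card G := by
    rw [← hMG]
    exact Nat.card_congr (Subgroup.equivMapOfInjective M _ hinj).toEquiv
  have horbM : p * p ∣ Nat.card M := by rw [hcardMG]; exact horbit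
  have hcardP : Nat.card (Perm (ZMod p)) = p.factorial := by
    rw [Nat.card_eq_fintype_card, Fintype.card_perm, ZMod.card]
  -- p divides |A|
  set snd' : ↥M →* Perm (ZMod p) := (MonoidHom.snd _ _).comp M.subtype with hsnd'
  have hkerA : Nat.card snd'.ker = Nat.card A := by
    apply Nat.card_congr
    refine ⟨fun m => ⟨(m.1.1).1, ?_⟩, fun σ => ⟨⟨((σ : Perm (ZMod p)), 1), σ.2⟩,
      MonoidHom.mem_ker.mpr rfl⟩, ?_, ?_⟩
    · have hm2 : (m.1.1).2 = 1 := MonoidHom.mem_ker.mp m.2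
      have he : ((m.1.1).1, (1 : Perm (ZMod p))) = m.1.1 := Prod.ext rfl hm2.symm
      exact (memA _).mpr (he ▸ m.1.2)
    · intro m
      have hm2 : (m.1.1).2 = 1 := MonoidHom.mem_ker.mp m.2
      exact Subtype.ext (Subtype.ext (Prod.ext rfl hm2.symm))
    · intro σ
      rfl
  have hpA : p ∣ Nat.card A := by
    rw [← hkerA]
    refine pdvd_ker p hp snd' horbM fun hd => not_ppdvd_fact p hp ?_
    exact dvd_trans hd (hcardP ▸ Subgroup.card_subgroup_dvd_card _)
  -- p divides |B|
  set fst' : ↥M →* Perm (ZMod p) := (MonoidHom.fst _ _).comp M.subtype with hfst'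
  have hkerB : Nat.card fst'.ker = Nat.card B := by
    apply Nat.card_congr
    refine ⟨fun m => ⟨(m.1.1).2, ?_⟩, fun τ => ⟨⟨(1, (τ : Perm (ZMod p))), τ.2⟩,
      MonoidHom.mem_ker.mpr rfl⟩, ?_, ?_⟩
    · have hm1 : (m.1.1).1 = 1 := MonoidHom.mem_ker.mp m.2
      have he : ((1 : Perm (ZMod p)), (m.1.1).2) = m.1.1 := Prod.ext hm1.symm rfl
      exact (memB _).mpr (he ▸ m.1.2)
    · intro m
      have hm1 : (m.1.1).1 = 1 := MonoidHom.mem_ker.mp m.2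
      exact Subtype.ext (Subtype.ext (Prod.ext hm1.symm rfl))
    · intro τ
      rfl
  have hpB : p ∣ Nat.card B := by
    rw [← hkerB]
    refine pdvd_ker p hp fst' horbM fun hd => not_ppdvd_fact p hp ?_
    exact dvd_trans hd (hcardP ▸ Subgroup.card_subgroup_dvd_card _)
  have htA : IsTransSub A := trans_of_pdvd p A hpA
  have htB : IsTransSub B := trans_of_pdvd p B hpB
  -- conjugation stability
  have hconjA : ∀ m ∈ M, ∀ a ∈ A, m.1 * a * m.1⁻¹ ∈ A := by
    intro m hm a ha
    have h2 : m * ((a, 1) * m⁻¹) ∈ M := mul_mem hm (mul_mem ((memA a).mp ha) (inv_mem hm))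
    apply (memA _).mpr
    have he : ((m.1 * a * m.1⁻¹ : Perm (ZMod p)), (1 : Perm (ZMod p))) = m * ((a, 1) * m⁻¹) := by
      simp [Prod.ext_iff, mul_assoc]
    rw [he]; exact h2
  have hconjB : ∀ m ∈ M, ∀ b ∈ B, m.2 * b * m.2⁻¹ ∈ B := by
    intro m hm b hb
    have h2 : m * ((1, b) * m⁻¹) ∈ M := mul_mem hm (mul_mem ((memB b).mp hb) (inv_mem hm))
    apply (memB _).mpr
    have he : ((1 : Perm (ZMod p)), (m.2 * b * m.2⁻¹ : Perm (ZMod p))) = m * ((1, b) * m⁻¹) := by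
      simp [Prod.ext_iff, mul_assoc]
    rw [he]; exact h2
  have hnorm : ∀ m ∈ M, m.1 ∈ (Subgroup.normalizer (A : Set (Equiv.Perm (ZMod p)))) ∧ m.2 ∈ (Subgroup.normalizer (B : Set (Equiv.Perm (ZMod p)))) := by
    intro m hm
    constructor
    · rw [Subgroup.mem_normalizer_iff]
      intro a
      constructor
      · exact fun ha => hconjA m hm a ha
      · intro ha
        have h2 := hconjA m⁻¹ (inv_mem hm) _ ha
        have h3 : (m⁻¹).1 * (m.1 * a * m.1⁻¹) * ((m⁻¹).1)⁻¹ = a := by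
          rw [Prod.fst_inv]; group
        rwa [h3] at h2
    · rw [Subgroup.mem_normalizer_iff]
      intro b
      constructor
      · exact fun hb => hconjB m hm b hb
      · intro hb
        have h2 := hconjB m⁻¹ (inv_mem hm) _ hb
        have h3 : (m⁻¹).2 * (m.2 * b * m.2⁻¹) * ((m⁻¹).2)⁻¹ = b := by
          rw [Prod.snd_inv]; group
        rwa [h3] at h2
  constructor
  · -- statement (2)
    refine ⟨A, B, htA, htB, ?_, ?_⟩
    · intro σ hσ τ hτ
      have h2 : (σ, τ) ∈ M := by
        have := mul_mem ((memA σ).mp hσ) ((memB τ).mp hτ)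
        simpa using this
      exact h2
    · intro g hg
      obtain ⟨m, hm, he⟩ := hGM g hg
      exact ⟨m.1, (hnorm m hm).1, m.2, (hnorm m hm).2, he.symm⟩
  · -- statement (3)
    set Hs : Subgroup (Perm (ZMod p)) := M.map (MonoidHom.fst _ _) with hHs
    have hAHs : A ≤ Hs := fun σ hσ => ⟨(σ, 1), (memA σ).mp hσ, rfl⟩
    have htHs : IsTransSub Hs := by
      intro x y
      obtain ⟨g, hg, hgx⟩ := htA x y
      exact ⟨g, hAHs hg, hgx⟩
    choose mm hmmM hmm1 using fun (σ : ↥Hs) => Subgroup.mem_map.mp σ.2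
    have hpair : ∀ σ : ↥Hs, ((σ : Perm (ZMod p)), (mm σ).2) ∈ M := by
      intro σ
      have h := hmm1 σ
      rw [← h]
      simpa using hmmM σ
    have wd : ∀ (σ τ τ' : Perm (ZMod p)), (σ, τ) ∈ M → (σ, τ') ∈ M →
        ∀ (hτ : τ ∈ (Subgroup.normalizer (B : Set (Equiv.Perm (ZMod p))))) (hτ' : τ' ∈ (Subgroup.normalizer (B : Set (Equiv.Perm (ZMod p))))),
        (QuotientGroup.mk ⟨τ, hτ⟩ : ↥(Subgroup.normalizer (B : Set (Equiv.Perm (ZMod p)))) ⧸ B.subgroupOf (Subgroup.normalizer (B : Set (Equiv.Perm (ZMod p))))) =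
          QuotientGroup.mk ⟨τ', hτ'⟩ := by
      intro σ τ τ' hMτ hMτ' hτ hτ'
      rw [QuotientGroup.eq, Subgroup.mem_subgroupOf]
      have h2 : (σ, τ)⁻¹ * (σ, τ') ∈ M := mul_mem (inv_mem hMτ) hMτ'
      have he : (σ, τ)⁻¹ * (σ, τ') = ((1 : Perm (ZMod p)), τ⁻¹ * τ') := by
        simp [Prod.ext_iff]
      rw [he] at h2
      exact (memB _).mpr h2
    set q : ↥Hs → ↥(Subgroup.normalizer (B : Set (Equiv.Perm (ZMod p)))) ⧸ B.subgroupOf (Subgroup.normalizer (B : Set (Equiv.Perm (ZMod p)))) :=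
      fun σ => QuotientGroup.mk ⟨(mm σ).2, (hnorm _ (hmmM σ)).2⟩ with hq
    have hqmul : ∀ a b : ↥Hs, q (a * b) = q a * q b := by
      intro a b
      have hrhs : q a * q b = QuotientGroup.mk
          (⟨(mm a).2 * (mm b).2, mul_mem (hnorm _ (hmmM a)).2 (hnorm _ (hmmM b)).2⟩ :
            ↥(Subgroup.normalizer (B : Set (Equiv.Perm (ZMod p))))) := rfl
      rw [hrhs]
      have hab : (((a * b : ↥Hs) : Perm (ZMod p)), (mm a).2 * (mm b).2) ∈ M := by
        have h2 := mul_mem (hpair a) (hpair b)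
        exact h2
      exact wd _ _ _ (hpair (a * b)) hab _ _
    refine ⟨Hs, B, htHs, htB, MonoidHom.mk' q hqmul, ?_⟩
    intro g
    constructor
    · intro hg
      obtain ⟨m, hm, he⟩ := hGM g hg
      refine ⟨⟨m.1, ⟨m, hm, rfl⟩⟩, ⟨m.2, (hnorm m hm).2⟩, he.symm, ?_⟩
      exact wd _ _ _ (hpair _) hm _ _
    · rintro ⟨σ, τ, rfl, hfτ⟩
      have h2 : ((σ : Perm (ZMod p)), (mm σ).2) ∈ M := hpair σ
      have h3 : (mm σ).2⁻¹ * (τ : Perm (ZMod p)) ∈ B := by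
        have := (QuotientGroup.eq.mp hfτ)
        rwa [Subgroup.mem_subgroupOf] at this
      have h4 : ((1 : Perm (ZMod p)), (mm σ).2⁻¹ * (τ : Perm (ZMod p))) ∈ M := (memB _).mp h3
      have h5 := mul_mem h2 h4
      have he : ((σ : Perm (ZMod p)), (mm σ).2) *
          ((1 : Perm (ZMod p)), (mm σ).2⁻¹ * (τ : Perm (ZMod p))) =
          ((σ : Perm (ZMod p)), (τ : Perm (ZMod p))) := by
        simp [Prod.ext_iff]
      rw [he] at h5
      exact h5

/-- Lemma 1 of the paper. For a transitive subgroup `G` of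
`Sym(ZMod p × ZMod p)` the following are equivalent: (1) `G ≤ S_p × S_p` (every
element acts coordinatewise); (2) there are transitive `H, K ≤ Sym(ZMod p)` with
`H × K ≤ G ≤ N(H) × N(K)`; (3) there are transitive `H, K ≤ Sym(ZMod p)` and a
homomorphism `f : H → N(K)/K` with `G = {(σ,τ) ∈ H × N(K) : f σ = τ K}`. -/
theorem subgroups_of_Sp_times_Sp (p : ℕ) [Fact p.Prime]
    (G : Subgroup (Equiv.Perm (ZMod p × ZMod p))) (hG : IsTransSub G) :
    ((∀ g ∈ G, ∃ σ τ : Equiv.Perm (ZMod p), ∀ x : ZMod p × ZMod p, g x = (σ x.1, τ x.2)) ↔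
      (∃ H K : Subgroup (Equiv.Perm (ZMod p)), IsTransSub H ∧ IsTransSub K ∧
        (∀ σ ∈ H, ∀ τ ∈ K, Equiv.prodCongr σ τ ∈ G) ∧
        (∀ g ∈ G, ∃ σ ∈ (Subgroup.normalizer (H : Set (Equiv.Perm (ZMod p)))), ∃ τ ∈ (Subgroup.normalizer (K : Set (Equiv.Perm (ZMod p)))), g = Equiv.prodCongr σ τ))) ∧
    ((∀ g ∈ G, ∃ σ τ : Equiv.Perm (ZMod p), ∀ x : ZMod p × ZMod p, g x = (σ x.1, τ x.2)) ↔
      (∃ H K : Subgroup (Equiv.Perm (ZMod p)), IsTransSub H ∧ IsTransSub K ∧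
        ∃ f : H →* (↥(Subgroup.normalizer (K : Set (Equiv.Perm (ZMod p)))) ⧸ K.subgroupOf (Subgroup.normalizer (K : Set (Equiv.Perm (ZMod p))))),
          ∀ g : Equiv.Perm (ZMod p × ZMod p), g ∈ G ↔
            ∃ (σ : H) (τ : (Subgroup.normalizer (K : Set (Equiv.Perm (ZMod p))))),
              g = Equiv.prodCongr (σ : Equiv.Perm (ZMod p)) (τ : Equiv.Perm (ZMod p)) ∧
              f σ = QuotientGroup.mk τ)) := by
  constructor
  · constructor
    · intro h1
      exact (forward p G hG h1).1
    · rintro ⟨H, K, _, _, _, hN⟩ g hg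
      obtain ⟨σ, _, τ, _, rfl⟩ := hN g hg
      exact ⟨σ, τ, fun x => rfl⟩
  · constructor
    · intro h1
      exact (forward p G hG h1).2
    · rintro ⟨H, K, _, _, f, hf⟩ g hg
      obtain ⟨σ, τ, rfl, _⟩ := (hf g).mp hg
      exact ⟨σ, τ, fun x => rfl⟩
end Paper
end

section
/- Let p and q be distinct primes, t ≥ 1, n = q^t, and let G be a transitive subgroup of Sym(Z_p) containing the p-cycle i ↦ i + 1. Then each G-invariant subgroup C of (Z_n)^p is uniquely determined by its chain: if C and C' are G-invariant subgroups of (Z_n)^p with φ_i(C ∩ q^i(Z_n)^p) = φ_i(C' ∩ q^i(Z_n)^p) for all 0 ≤ i < t, then C = C'. -/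
open Equiv

namespace Paper

variable {α : Type*} (p : ℕ)

/-- The `i`-th member of the chain associated to a subgroup `C` of `(ZMod q^t)^p`:
the image under `φᵢ` of `C ∩ qⁱ·(ZMod q^t)^p`, where `φᵢ(qⁱ·y) = y mod q`. -/
def chainSet (q t : ℕ) (ht : q ∣ q ^ t) (C : AddSubgroup (ZMod p → ZMod (q ^ t)))
    (i : ℕ) : Set (ZMod p → ZMod q) :=
  {w | ∃ y : ZMod p → ZMod (q ^ t),
    (fun j => (q : ZMod (q ^ t)) ^ i * y j) ∈ C ∧
    w = fun j => ZMod.castHom ht (ZMod q) (y j)}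

end Paper

section Aux

open MonoidAlgebra Finsupp Multiplicative

namespace PaperAux


lemma closed_aux {p m : ℕ} [NeZero p] [NeZero m]
    (C : AddSubgroup (ZMod p → ZMod m))
    (hC1 : ∀ v ∈ C, (fun j => v (j - 1)) ∈ C) :
    ∀ (c : ZMod m) (k : ZMod p), ∀ v ∈ C, (fun j => c * v (j - k)) ∈ C := by
  have hshift : ∀ (N : ℕ), ∀ v ∈ C, (fun j => v (j - (N : ZMod p))) ∈ C := by
    intro N
    induction N with
    | zero => intro v hv; simpa using hv
    | succ n ih =>
      intro v hv
      have h2 := hC1 _ (ih v hv)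
      have he : (fun j => (fun j' => v (j' - (n : ZMod p))) (j - 1))
           = (fun j => v (j - ((n+1 : ℕ) : ZMod p))) := by
        funext j; congr 1; push_cast; ring
      rwa [he] at h2
  intro c k v hv
  have h1 : (fun j => v (j - k)) ∈ C := by
    have := hshift k.val v hv
    rwa [ZMod.natCast_val, ZMod.cast_id] at this
  have h2 : (fun j => c * v (j - k)) = c.val • (fun j => v (j - k)) := by
    funext j
    simp only [Pi.smul_apply, nsmul_eq_mul]
    rw [ZMod.natCast_val, ZMod.cast_id]
  rw [h2]
  exact AddSubgroup.nsmul_mem C h1 c.val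

def toIdeal {p m : ℕ} (C : AddSubgroup (ZMod p → ZMod m))
    (hC : ∀ (c : ZMod m) (k : ZMod p), ∀ v ∈ C, (fun j => c * v (j - k)) ∈ C) :
    Ideal (MonoidAlgebra (ZMod m) (Multiplicative (ZMod p))) where
  carrier := {x | (fun j => x.coeff (ofAdd j)) ∈ C}
  add_mem' := by
    intro a b ha hb
    have h := C.add_mem ha hb
    have he : ((fun j => a.coeff (ofAdd j)) + fun j => b.coeff (ofAdd j))
        = fun j => (a + b).coeff (ofAdd j) := by
      funext j; exact (Finsupp.add_apply a.coeff b.coeff (ofAdd j)).symm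
    rwa [he] at h
  zero_mem' := by
    have h := C.zero_mem
    have he : (0 : ZMod p → ZMod m) = fun j => (0 : MonoidAlgebra (ZMod m) (Multiplicative (ZMod p))).coeff (ofAdd j) := by
      funext j; simp
    rwa [he] at h
  smul_mem' := by
    intro r x hx
    simp only [Set.mem_setOf_eq, smul_eq_mul] at *
    induction r using MonoidAlgebra.induction_on with
    | add f g hf hg =>
      rw [add_mul]
      have he : (fun j => (f * x + g * x).coeff (ofAdd j))
          = (fun j => (f * x).coeff (ofAdd j)) + fun j => (g * x).coeff (ofAdd j) := by
        funext j; rw [MonoidAlgebra.coeff_add, Finsupp.add_apply]; rfl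
      rw [he]
      exact C.add_mem hf hg
    | smul r f hf =>
      rw [smul_mul_assoc]
      have he : (fun j => (r • (f * x)).coeff (ofAdd j))
          = fun j => r * (fun j' => (f * x).coeff (ofAdd j')) (j - 0) := by
        funext j
        rw [MonoidAlgebra.coeff_smul, Finsupp.smul_apply, smul_eq_mul, sub_zero]
      rw [he]
      exact hC r 0 _ hf
    | of g =>
      have key : (fun j => ((MonoidAlgebra.of (ZMod m) (Multiplicative (ZMod p)) g) * x).coeff (ofAdd j))
          = fun j => (1 : ZMod m) * (fun j' => x.coeff (ofAdd j')) (j - toAdd g) := by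
        funext j
        rw [MonoidAlgebra.of_apply, MonoidAlgebra.coeff_single_mul_apply]
        have hm : g⁻¹ * ofAdd j = ofAdd (j - toAdd g) := by
          rw [sub_eq_neg_add, ofAdd_add, ofAdd_neg, ofAdd_toAdd, mul_comm]
        rw [hm, one_mul]
      rw [key]
      exact hC 1 (toAdd g) _ hx

lemma mem_toIdeal {p m : ℕ} (C : AddSubgroup (ZMod p → ZMod m)) (hC)
    (x : MonoidAlgebra (ZMod m) (Multiplicative (ZMod p))) :
    x ∈ toIdeal C hC ↔ (fun j => x.coeff (ofAdd j)) ∈ C := by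
  exact ⟨fun h => h, fun h => h⟩



variable {p q t : ℕ}

/-- The coefficientwise reduction map `R →+* S`. -/
noncomputable def piHom (p : ℕ) {q t : ℕ} (ht : q ∣ q ^ t) :
    MonoidAlgebra (ZMod (q ^ t)) (Multiplicative (ZMod p)) →+*
      MonoidAlgebra (ZMod q) (Multiplicative (ZMod p)) :=
  MonoidAlgebra.liftNCRingHom
    ((MonoidAlgebra.singleOneRingHom).comp (ZMod.castHom ht (ZMod q)))
    (MonoidAlgebra.of _ _) (fun _ _ => Commute.all _ _)

lemma piHom_single (ht : q ∣ q ^ t) (a : Multiplicative (ZMod p)) (b : ZMod (q ^ t)) :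
    piHom p ht (MonoidAlgebra.single a b) = MonoidAlgebra.single a (ZMod.castHom ht (ZMod q) b) := by
  unfold piHom
  rw [MonoidAlgebra.liftNCRingHom]
  show MonoidAlgebra.liftNC _ _ (MonoidAlgebra.single a b) = _
  rw [MonoidAlgebra.liftNC_single]
  show (MonoidAlgebra.single (1 : Multiplicative (ZMod p)) ((ZMod.castHom ht (ZMod q)) b)) *
      MonoidAlgebra.single a (1 : ZMod q) = _
  rw [MonoidAlgebra.single_mul_single, one_mul, mul_one]

lemma piHom_apply (ht : q ∣ q ^ t) (x : MonoidAlgebra (ZMod (q ^ t)) (Multiplicative (ZMod p)))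
    (g : Multiplicative (ZMod p)) :
    (piHom p ht x).coeff g = ZMod.castHom ht (ZMod q) (x.coeff g) := by
  induction x using MonoidAlgebra.induction_linear with
  | zero => simp
  | add f₁ f₂ h1 h2 =>
    rw [map_add]
    rw [MonoidAlgebra.coeff_add, MonoidAlgebra.coeff_add, Finsupp.add_apply, Finsupp.add_apply, h1, h2, map_add]
  | single a b =>
    rw [piHom_single, MonoidAlgebra.coeff_single, MonoidAlgebra.coeff_single, Finsupp.single_apply, Finsupp.single_apply, apply_ite (ZMod.castHom ht (ZMod q)), map_zero]

lemma piHom_surj (ht : q ∣ q ^ t) [NeZero q]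
    (s : MonoidAlgebra (ZMod q) (Multiplicative (ZMod p))) :
    ∃ r, piHom p ht r = s := by
  refine ⟨MonoidAlgebra.ofCoeff (s.coeff.mapRange (fun c => ((c.val : ℕ) : ZMod (q ^ t))) (by simp)), ?_⟩
  ext g
  rw [piHom_apply, MonoidAlgebra.coeff_ofCoeff, Finsupp.mapRange_apply, map_natCast, ZMod.natCast_val, ZMod.cast_id]

/-- The element `q·1` of the big monoid algebra. -/
noncomputable def Qel (p q t : ℕ) : MonoidAlgebra (ZMod (q ^ t)) (Multiplicative (ZMod p)) :=
  MonoidAlgebra.single 1 ((q : ℕ) : ZMod (q ^ t))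

lemma Qel_pow_apply (i : ℕ) (y : MonoidAlgebra (ZMod (q ^ t)) (Multiplicative (ZMod p)))
    (g : Multiplicative (ZMod p)) :
    ((Qel p q t) ^ i * y).coeff g = ((q : ZMod (q ^ t)) ^ i) * y.coeff g := by
  unfold Qel
  rw [MonoidAlgebra.single_pow, one_pow, MonoidAlgebra.coeff_single_mul_apply, inv_one, one_mul]

lemma Qel_pow_eq_zero (hti : t ≤ i) : (Qel p q t) ^ i = 0 := by
  unfold Qel
  rw [MonoidAlgebra.single_pow, one_pow]
  have h0 : ((q : ZMod (q ^ t)) ^ i) = 0 := by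
    rw [← Nat.cast_pow, ZMod.natCast_eq_zero_iff]
    exact pow_dvd_pow q hti
  rw [h0]
  simp

lemma ker_factor (ht : q ∣ q ^ t) [NeZero q] [NeZero (q ^ t)]
    (x : MonoidAlgebra (ZMod (q ^ t)) (Multiplicative (ZMod p)))
    (hx : piHom p ht x = 0) : ∃ u, x = Qel p q t * u := by
  refine ⟨MonoidAlgebra.ofCoeff (x.coeff.mapRange (fun c => (((c.val / q : ℕ)) : ZMod (q ^ t))) (by simp)), ?_⟩
  ext g
  have hg : ZMod.castHom ht (ZMod q) (x.coeff g) = 0 := by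
    rw [← piHom_apply, hx]; simp
  have hdvd : q ∣ (x.coeff g).val := by
    rw [ZMod.castHom_apply] at hg
    rwa [← ZMod.natCast_val, ZMod.natCast_eq_zero_iff] at hg
  unfold Qel
  rw [MonoidAlgebra.coeff_single_mul_apply, inv_one, one_mul, MonoidAlgebra.coeff_ofCoeff, Finsupp.mapRange_apply,
    ← Nat.cast_mul, Nat.mul_div_cancel' hdvd, ZMod.natCast_val, ZMod.cast_id]

lemma ker_nilpotent (ht : q ∣ q ^ t) [NeZero q] [NeZero (q ^ t)] :
    ∀ x ∈ RingHom.ker (piHom p ht), IsNilpotent x := by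
  intro x hx
  obtain ⟨u, rfl⟩ := ker_factor ht x hx
  refine ⟨t, ?_⟩
  rw [mul_pow, Qel_pow_eq_zero le_rfl, zero_mul]

/-- Chain ideal: the ideal-world version of `chainSet`. -/
noncomputable def chainIdeal (ht : q ∣ q ^ t) [NeZero q]
    (I : Ideal (MonoidAlgebra (ZMod (q ^ t)) (Multiplicative (ZMod p)))) (i : ℕ) :
    Ideal (MonoidAlgebra (ZMod q) (Multiplicative (ZMod p))) where
  carrier := {w | ∃ y, (Qel p q t) ^ i * y ∈ I ∧ piHom p ht y = w}
  zero_mem' := ⟨0, by simp, map_zero _⟩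
  add_mem' := by
    rintro a b ⟨y₁, h₁, e₁⟩ ⟨y₂, h₂, e₂⟩
    exact ⟨y₁ + y₂, by rw [mul_add]; exact I.add_mem h₁ h₂, by rw [map_add, e₁, e₂]⟩
  smul_mem' := by
    rintro s w ⟨y, hy, hw⟩
    obtain ⟨r, hr⟩ := piHom_surj ht s
    refine ⟨r * y, ?_, by rw [map_mul, hr, hw]; rfl⟩
    rw [mul_left_comm]
    exact Ideal.mul_mem_left I r hy

lemma mem_chainIdeal (ht : q ∣ q ^ t) [NeZero q] (I) (i : ℕ) (w) :
    w ∈ chainIdeal ht I i ↔ ∃ y, (Qel p q t) ^ i * y ∈ I ∧ piHom p ht y = w :=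
  ⟨fun h => h, fun h => h⟩

/-- Maschke: every ideal of `(ZMod q)[ZMod p]` has an idempotent generator. -/
lemma exists_idem [Fact p.Prime] [Fact q.Prime] (hpq : p ≠ q)
    (J : Ideal (MonoidAlgebra (ZMod q) (Multiplicative (ZMod p)))) :
    ∃ e, IsIdempotentElem e ∧ e ∈ J ∧ ∀ w ∈ J, w = w * e := by
  haveI : NeZero ((Nat.card (Multiplicative (ZMod p)) : ZMod q)) := by
    constructor
    have hcard : Nat.card (Multiplicative (ZMod p)) = p := by
      rw [Nat.card_eq_fintype_card, Fintype.card_multiplicative, ZMod.card]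
    rw [hcard]
    intro h0
    rw [ZMod.natCast_eq_zero_iff] at h0
    exact hpq ((Nat.prime_dvd_prime_iff_eq (Fact.out) (Fact.out)).mp h0).symm
  obtain ⟨K, hK⟩ := MonoidAlgebra.Submodule.exists_isCompl
    (J : Submodule (MonoidAlgebra (ZMod q) (Multiplicative (ZMod p)))
      (MonoidAlgebra (ZMod q) (Multiplicative (ZMod p))))
  have h1 : (1 : MonoidAlgebra (ZMod q) (Multiplicative (ZMod p))) ∈ J ⊔ K := by
    rw [hK.sup_eq_top]; trivial
  obtain ⟨e, he, f, hf, hef⟩ := Submodule.mem_sup.mp h1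
  have hmulJK : ∀ a ∈ J, ∀ b ∈ K, a * b = 0 := by
    intro a ha b hb
    have hJ : a * b ∈ J := by rw [mul_comm]; exact J.mul_mem_left b ha
    have hKm : a * b ∈ K := K.smul_mem a hb
    have : a * b ∈ J ⊓ K := ⟨hJ, hKm⟩
    rwa [hK.inf_eq_bot, Submodule.mem_bot] at this
  refine ⟨e, ?_, he, ?_⟩
  · have : e * (e + f) = e * 1 := by rw [hef]
    rw [mul_add, hmulJK e he f hf, add_zero, mul_one] at this
    exact this
  · intro w hw
    have : w * (e + f) = w * 1 := by rw [hef]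
    rw [mul_add, hmulJK w hw f hf, add_zero, mul_one] at this
    exact this.symm

/-- Key Lemma A: the idempotent piece belongs to the ideal. -/
lemma qpow_idem_mem (ht : q ∣ q ^ t) [NeZero q] [NeZero (q ^ t)]
    (I : Ideal (MonoidAlgebra (ZMod (q ^ t)) (Multiplicative (ZMod p)))) (i : ℕ)
    (E : MonoidAlgebra (ZMod (q ^ t)) (Multiplicative (ZMod p))) (hE : IsIdempotentElem E)
    (hmem : piHom p ht E ∈ chainIdeal ht I i) : (Qel p q t) ^ i * E ∈ I := by
  obtain ⟨y, hy, hpy⟩ := hmem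
  obtain ⟨u, hu⟩ := ker_factor ht (y - E) (by rw [map_sub, hpy, sub_self])
  have hvn : IsNilpotent (Qel p q t * u) :=
    ⟨t, by rw [mul_pow, Qel_pow_eq_zero le_rfl, zero_mul]⟩
  obtain ⟨w, hw⟩ := hvn.isUnit_one_add
  have hyEv : y = E + Qel p q t * u := by rw [← hu]; ring
  have hEE : E * E = E := hE
  have hkey : E * ((Qel p q t) ^ i * y) = ((Qel p q t) ^ i * E) * (1 + Qel p q t * u) := by
    rw [hyEv]
    linear_combination ((Qel p q t) ^ i) * hEE
  have hmem1 : ((Qel p q t) ^ i * E) * (1 + Qel p q t * u) ∈ I := by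
    rw [← hkey]; exact Ideal.mul_mem_left I E hy
  have hfin : (((Qel p q t) ^ i * E) * (1 + Qel p q t * u)) * ↑w⁻¹ ∈ I :=
    Ideal.mul_mem_right _ I hmem1
  rwa [mul_assoc, ← hw, Units.mul_inv, mul_one] at hfin

/-- Main downward induction. -/
lemma main_induction [Fact p.Prime] [Fact q.Prime] (hpq : p ≠ q)
    (ht : q ∣ q ^ t) [NeZero q] [NeZero (q ^ t)]
    (I I' : Ideal (MonoidAlgebra (ZMod (q ^ t)) (Multiplicative (ZMod p))))
    (hchain : ∀ i, i < t → chainIdeal ht I i = chainIdeal ht I' i) :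
    ∀ d i, t ≤ i + d → ∀ y, (Qel p q t) ^ i * y ∈ I → (Qel p q t) ^ i * y ∈ I' := by
  intro d
  induction d with
  | zero =>
    intro i hi y _
    rw [Qel_pow_eq_zero (by omega), zero_mul]
    exact I'.zero_mem
  | succ d ih =>
    intro i hi y hy
    by_cases hcase : t ≤ i + d
    · exact ih i hcase y hy
    · have hit : i < t := by omega
      obtain ⟨e, he, heJ, hgen⟩ := exists_idem hpq (chainIdeal ht I i)
      obtain ⟨E, hE, hEe⟩ := exists_isIdempotentElem_eq_of_ker_isNilpotent
        (piHom p ht) (ker_nilpotent ht) e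
        (by obtain ⟨r, hr⟩ := piHom_surj ht e; exact ⟨r, hr⟩) he
      have hQE : (Qel p q t) ^ i * E ∈ I :=
        qpow_idem_mem ht I i E hE (by rw [hEe]; exact heJ)
      have hQE' : (Qel p q t) ^ i * E ∈ I' :=
        qpow_idem_mem ht I' i E hE (by rw [hEe, ← hchain i hit]; exact heJ)
      have hy' : piHom p ht y ∈ chainIdeal ht I i := ⟨y, hy, rfl⟩
      have hye : piHom p ht (y - y * E) = 0 := by
        rw [map_sub, map_mul, hEe, ← hgen _ hy', sub_self]
      obtain ⟨u, hu⟩ := ker_factor ht _ hye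
      have hexp : (Qel p q t) ^ i * y
          = ((Qel p q t) ^ i * E) * y + (Qel p q t) ^ (i + 1) * u := by
        linear_combination ((Qel p q t) ^ i) * hu
      have h2 : (Qel p q t) ^ (i + 1) * u ∈ I := by
        have := I.sub_mem hy (Ideal.mul_mem_right y I hQE)
        rwa [hexp, add_sub_cancel_left] at this
      have h3 := ih (i + 1) (by omega) u h2
      rw [hexp]
      exact I'.add_mem (Ideal.mul_mem_right y I' hQE') h3


end PaperAux

end Aux

namespace Paper

open MonoidAlgebra Finsupp Multiplicative PaperAux in
/-- Lemma 12(3) of the paper. For distinct primes `p ≠ q`,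
`n = q^t`, and a transitive `G ≤ Sym(ZMod p)` containing the `p`-cycle `i ↦ i+1`:
a `G`-invariant subgroup of `(ZMod n)^p` is uniquely determined by its chain. -/
theorem chain_determines_subgroup (p q t : ℕ) [Fact p.Prime] [Fact q.Prime]
    (hpq : p ≠ q) (htpos : 1 ≤ t) (ht : q ∣ q ^ t)
    (G : Subgroup (Equiv.Perm (ZMod p))) (hG : IsTransSub G)
    (hshift : Equiv.addRight (1 : ZMod p) ∈ G)
    (C C' : AddSubgroup (ZMod p → ZMod (q ^ t)))
    (hC : ∀ g ∈ G, ∀ v ∈ C, (fun i => v (g⁻¹ i)) ∈ C)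
    (hC' : ∀ g ∈ G, ∀ v ∈ C', (fun i => v (g⁻¹ i)) ∈ C')
    (hchain : ∀ i : ℕ, i < t → chainSet p q t ht C i = chainSet p q t ht C' i) :
    C = C' := by
  haveI : NeZero p := ⟨(Fact.out : p.Prime).ne_zero⟩
  haveI : NeZero q := ⟨(Fact.out : q.Prime).ne_zero⟩
  haveI : NeZero (q ^ t) := ⟨pow_ne_zero t (Fact.out : q.Prime).ne_zero⟩
  -- the inverse of the shift
  have hinv : ∀ j : ZMod p, (Equiv.addRight (1 : ZMod p))⁻¹ j = j - 1 := by
    intro j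
    have h := Equiv.apply_symm_apply (Equiv.addRight (1 : ZMod p)) j
    simp only [Equiv.coe_addRight] at h
    exact eq_sub_of_add_eq h
  have hC1 : ∀ v ∈ C, (fun j => v (j - 1)) ∈ C := by
    intro v hv
    have h := hC _ hshift v hv
    have he : (fun i => v ((Equiv.addRight (1 : ZMod p))⁻¹ i)) = fun j => v (j - 1) := by
      funext j; rw [hinv]
    rwa [he] at h
  have hC1' : ∀ v ∈ C', (fun j => v (j - 1)) ∈ C' := by
    intro v hv
    have h := hC' _ hshift v hv
    have he : (fun i => v ((Equiv.addRight (1 : ZMod p))⁻¹ i)) = fun j => v (j - 1) := by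
      funext j; rw [hinv]
    rwa [he] at h
  have hCc := closed_aux C hC1
  have hCc' := closed_aux C' hC1'
  set I := toIdeal C hCc with hI
  set I' := toIdeal C' hCc' with hI'
  -- correspondence between chainIdeal and chainSet
  have hcorr : ∀ (D : AddSubgroup (ZMod p → ZMod (q ^ t))) (hD) (i : ℕ) (w),
      w ∈ chainIdeal ht (toIdeal D hD) i ↔
        (fun j => w.coeff (ofAdd j)) ∈ chainSet p q t ht D i := by
    intro D hD i w
    constructor
    · rintro ⟨y, hy, hw⟩
      refine ⟨fun j => y.coeff (ofAdd j), ?_, ?_⟩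
      · have he : (fun j => ((Qel p q t) ^ i * y).coeff (ofAdd j))
            = fun j => (q : ZMod (q ^ t)) ^ i * y.coeff (ofAdd j) := by
          funext j; rw [Qel_pow_apply]
        rw [mem_toIdeal, he] at hy
        exact hy
      · funext j
        rw [← hw, piHom_apply]
    · rintro ⟨fy, hfy, hwf⟩
      have y0 : MonoidAlgebra (ZMod (q ^ t)) (Multiplicative (ZMod p)) :=
        MonoidAlgebra.ofCoeff (Finsupp.equivFunOnFinite.symm (fun g => fy (toAdd g)))
      refine ⟨@id (MonoidAlgebra (ZMod (q ^ t)) (Multiplicative (ZMod p)))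
        (MonoidAlgebra.ofCoeff (Finsupp.equivFunOnFinite.symm (fun g => fy (toAdd g)))), ?_, ?_⟩
      · rw [mem_toIdeal]
        have he : (fun j => ((Qel p q t) ^ i *
            @id (MonoidAlgebra (ZMod (q ^ t)) (Multiplicative (ZMod p)))
            (MonoidAlgebra.ofCoeff (Finsupp.equivFunOnFinite.symm (fun g => fy (toAdd g))))).coeff (ofAdd j))
            = fun j => (q : ZMod (q ^ t)) ^ i * fy j := by
          funext j
          rw [Qel_pow_apply]
          rfl
        rw [he]
        exact hfy
      · ext g
        rw [piHom_apply]
        have h1 : (@id (MonoidAlgebra (ZMod (q ^ t)) (Multiplicative (ZMod p)))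
            (MonoidAlgebra.ofCoeff (Finsupp.equivFunOnFinite.symm (fun g => fy (toAdd g))))).coeff g
            = fy (toAdd g) := rfl
        rw [h1]
        have h2 := congrFun hwf (toAdd g)
        rw [ofAdd_toAdd] at h2
        exact h2.symm
  -- chain ideals coincide
  have hchainI : ∀ i, i < t → chainIdeal ht I i = chainIdeal ht I' i := by
    intro i hit
    ext w
    rw [hI, hI', hcorr C hCc i w, hcorr C' hCc' i w, hchain i hit]
  -- conclude I = I'
  have hII' : I = I' := by
    apply le_antisymm
    · intro x hx
      have h := main_induction hpq ht I I' hchainI t 0 (by omega) x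
        (by rw [pow_zero, one_mul]; exact hx)
      rwa [pow_zero, one_mul] at h
    · intro x hx
      have h := main_induction hpq ht I' I
        (fun i hit => (hchainI i hit).symm) t 0 (by omega) x
        (by rw [pow_zero, one_mul]; exact hx)
      rwa [pow_zero, one_mul] at h
  -- conclude C = C'
  ext v
  have hx : (fun j => (MonoidAlgebra.ofCoeff (Finsupp.equivFunOnFinite.symm
      (fun g : Multiplicative (ZMod p) => v (toAdd g)))).coeff (ofAdd j)) = v := by
    funext j; rfl
  constructor
  · intro hv
    have hmem : MonoidAlgebra.ofCoeff (Finsupp.equivFunOnFinite.symm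
        (fun g : Multiplicative (ZMod p) => v (toAdd g))) ∈ I := by
      rw [hI, mem_toIdeal, hx]; exact hv
    rw [hII', hI', mem_toIdeal, hx] at hmem
    exact hmem
  · intro hv
    have hmem : MonoidAlgebra.ofCoeff (Finsupp.equivFunOnFinite.symm
        (fun g : Multiplicative (ZMod p) => v (toAdd g))) ∈ I' := by
      rw [hI', mem_toIdeal, hx]; exact hv
    rw [← hII', hI, mem_toIdeal, hx] at hmem
    exact hmem

end Paper
end

section
/- Let G be a finite p-group and let X, Y ⊆ G × G be Cayley digraphs of G (i.e., the left regular representation G_L is contained in Aut(X) and in Aut(Y)). Suppose some subgroup P of Sym(G) is simultaneously a Sylow p-subgroup of Aut(X) and a Sylow p-subgroup of Aut(Y). Then X and Y are isomorphic if and only if there exists δ in the normalizer N_{Sym(G)}(P) with δ(X) = Y, i.e., such that for all u, v ∈ G, (u, v) ∈ X if and only if (δ(u), δ(v)) ∈ Y. -/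
open Equiv
open Pointwise

namespace Paper

variable {α : Type*} (p : ℕ)

/-- `P` is a Sylow `p`-subgroup of the subgroup `G` of `Perm α`:
a maximal `p`-subgroup of `G`. -/
def IsSylowSub (p : ℕ) (G P : Subgroup (Equiv.Perm α)) : Prop :=
  P ≤ G ∧ IsPGroup p P ∧
    ∀ Q : Subgroup (Equiv.Perm α), Q ≤ G → IsPGroup p Q → P ≤ Q → Q = P

/-- The automorphism group of a digraph `X` on the vertex set `β`. -/
def AutD {β : Type*} (X : Set (β × β)) : Subgroup (Equiv.Perm β) where
  carrier := {σ | ∀ u v : β, (u, v) ∈ X ↔ (σ u, σ v) ∈ X}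
  one_mem' := fun u v => Iff.rfl
  mul_mem' := by
    intro σ τ hσ hτ u v
    rw [hτ u v, hσ (τ u) (τ v)]
    simp [Equiv.Perm.mul_apply]
  inv_mem' := by
    intro σ hσ u v
    have := hσ (σ⁻¹ u) (σ⁻¹ v)
    simp only [Equiv.Perm.inv_def, Equiv.apply_symm_apply] at this
    exact this.symm

open Pointwise in
/-- Package an `IsSylowSub` as a Mathlib `Sylow p ♥H`-style structure. -/
def IsSylowSub.toSylow {p : ℕ} {H S : Subgroup (Equiv.Perm α)} (h : IsSylowSub p H S) :
    Sylow p ↥H where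
  toSubgroup := S.subgroupOf H
  isPGroup' := h.2.1.comap_subtype
  is_maximal' := by
    intro Q hQ hle
    have hQ' : IsPGroup p (Q.map H.subtype) := hQ.map _
    have hPle : S ≤ Q.map H.subtype := by
      have : (S.subgroupOf H).map H.subtype ≤ Q.map H.subtype :=
        Subgroup.map_mono hle
      rwa [Subgroup.subgroupOf_map_subtype, inf_of_le_left h.1] at this
    have := h.2.2 (Q.map H.subtype) (Subgroup.map_subtype_le Q) hQ' hPle
    have hinj : Function.Injective H.subtype := Subtype.coe_injective
    apply Subgroup.map_injective hinj
    rw [this, Subgroup.subgroupOf_map_subtype, inf_of_le_left h.1]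

/-- Lemma 15 of the paper, digraph instance. Let `G` be a finite
`p`-group and `X, Y` Cayley digraphs of `G` such that some `P ≤ Sym(G)` is
simultaneously a Sylow `p`-subgroup of `Aut(X)` and of `Aut(Y)`.  Then `X ≅ Y` iff
there is an isomorphism `δ` lying in the normalizer `N_{Sym(G)}(P)`. -/
theorem cayley_isomorphic_iff_normalizer (p : ℕ) (hp : p.Prime)
    (G : Type*) [Group G] [Finite G] (hpG : IsPGroup p G)
    (X Y : Set (G × G))
    (hX : ∀ g : G, Equiv.mulLeft g ∈ AutD X) (hY : ∀ g : G, Equiv.mulLeft g ∈ AutD Y)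
    (P : Subgroup (Equiv.Perm G))
    (hPX : IsSylowSub p (AutD X) P) (hPY : IsSylowSub p (AutD Y) P) :
    (∃ σ : Equiv.Perm G, ∀ u v : G, (u, v) ∈ X ↔ (σ u, σ v) ∈ Y) ↔
    (∃ δ ∈ Subgroup.normalizer (P : Set (Equiv.Perm G)), ∀ u v : G, (u, v) ∈ X ↔ (δ u, δ v) ∈ Y) := by
  classical
  constructor
  · rintro ⟨σ, hσ⟩
    haveI : Fact p.Prime := ⟨hp⟩
    set H : Subgroup (Equiv.Perm G) := AutD Y with hH
    -- σ⁻¹ pulls Y back to X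
    have hσ' : ∀ u v : G, (u, v) ∈ Y ↔ (σ⁻¹ u, σ⁻¹ v) ∈ X := by
      intro u v
      rw [hσ (σ⁻¹ u) (σ⁻¹ v)]
      simp
    -- conjugation by σ maps Aut X into Aut Y and back
    have hXY : ∀ τ : Equiv.Perm G, τ ∈ AutD X → σ * τ * σ⁻¹ ∈ AutD Y := by
      intro τ hτ u v
      rw [hσ' u v, hτ (σ⁻¹ u) (σ⁻¹ v), hσ (τ (σ⁻¹ u)) (τ (σ⁻¹ v))]
      simp [Equiv.Perm.mul_apply]
    have hYX : ∀ τ : Equiv.Perm G, τ ∈ AutD Y → σ⁻¹ * τ * σ ∈ AutD X := by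
      intro τ hτ u v
      rw [hσ u v, hτ (σ u) (σ v), hσ' (τ (σ u)) (τ (σ v))]
      simp [Equiv.Perm.mul_apply]
    -- the conjugate subgroup
    set Q : Subgroup (Equiv.Perm G) := P.map (MulAut.conj σ).toMonoidHom with hQdef
    have hmemQ : ∀ x : Equiv.Perm G, x ∈ Q ↔ σ⁻¹ * x * σ ∈ P := by
      intro x
      rw [hQdef, Subgroup.mem_map_equiv]
      simp [MulAut.conj, mul_assoc]
    have hQle : Q ≤ H := by
      rintro x hx
      rw [hmemQ] at hx
      have := hXY _ (hPX.1 hx)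
      simpa [mul_assoc] using this
    have hQsylow : IsSylowSub p H Q := by
      refine ⟨hQle, hPX.2.1.map _, ?_⟩
      intro R hRle hRp hQR
      set R' : Subgroup (Equiv.Perm G) := R.map (MulAut.conj σ⁻¹).toMonoidHom with hR'def
      have hmemR' : ∀ x : Equiv.Perm G, x ∈ R' ↔ σ * x * σ⁻¹ ∈ R := by
        intro x
        rw [hR'def, Subgroup.mem_map_equiv]
        simp [MulAut.conj, mul_assoc]
      have hR'le : R' ≤ AutD X := by
        intro x hx
        rw [hmemR'] at hx
        have := hYX _ (hRle hx)
        simpa [mul_assoc] using this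
      have hPR' : P ≤ R' := by
        intro x hx
        rw [hmemR']
        exact hQR ((hmemQ _).2 (by simpa [mul_assoc] using hx))
      have hR'eq : R' = P := hPX.2.2 R' hR'le (hRp.map _) hPR'
      ext x
      rw [hmemQ, ← hR'eq, hmemR']
      simp [mul_assoc]
    -- Sylow subgroups of H
    have : Finite ↥H := inferInstance
    obtain ⟨u, hu⟩ := MulAction.exists_smul_eq ↥H hQsylow.toSylow hPY.toSylow
    have hEq : MulAut.conj u • (Q.subgroupOf H) = P.subgroupOf H := by
      have := congrArg Sylow.toSubgroup hu
      rwa [Sylow.coe_subgroup_smul] at this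
    -- key conjugation fact
    have hkey : ∀ w : Equiv.Perm G, (↑u * w * (↑u)⁻¹ ∈ P) ↔ w ∈ Q := by
      intro w
      constructor
      · intro hw
        have hwH : w ∈ H := by
          have h1 : (↑u * w * (↑u)⁻¹ : Equiv.Perm G) ∈ H := hPY.1 hw
          have h2 : ((↑u)⁻¹ * (↑u * w * (↑u)⁻¹) * ↑u : Equiv.Perm G) ∈ H :=
            H.mul_mem (H.mul_mem (H.inv_mem u.2) h1) u.2
          simpa [mul_assoc] using h2
        have hz : (⟨↑u * w * (↑u)⁻¹, hPY.1 hw⟩ : ↥H) ∈ P.subgroupOf H := hw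
        rw [← hEq, Subgroup.mem_pointwise_smul_iff_inv_smul_mem] at hz
        have : ((u⁻¹ * ⟨↑u * w * (↑u)⁻¹, hPY.1 hw⟩ * u : ↥H) : Equiv.Perm G) ∈ Q := by
          simpa [Subgroup.mem_subgroupOf] using hz
        simpa [mul_assoc] using this
      · intro hw
        have hz : (⟨w, hQle hw⟩ : ↥H) ∈ Q.subgroupOf H := hw
        have : MulAut.conj u • (⟨w, hQle hw⟩ : ↥H) ∈ MulAut.conj u • (Q.subgroupOf H) :=
          Subgroup.smul_mem_pointwise_smul _ _ _ hz
        rw [hEq] at this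
        have h2 : ((u * ⟨w, hQle hw⟩ * u⁻¹ : ↥H) : Equiv.Perm G) ∈ P := by
          simpa [Subgroup.mem_subgroupOf, MulAut.smul_def] using this
        simpa using h2
    refine ⟨↑u * σ, ?_, ?_⟩
    · rw [Subgroup.mem_normalizer_iff]
      intro x
      rw [show (↑u * σ : Equiv.Perm G) * x * (↑u * σ)⁻¹
          = ↑u * (σ * x * σ⁻¹) * (↑u)⁻¹ by group]
      rw [hkey, hmemQ]
      simp [mul_assoc]
    · intro a b
      rw [hσ a b]
      have := u.2 (σ a) (σ b)
      simpa [Equiv.Perm.mul_apply] using this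
  · rintro ⟨δ, _, hδ⟩
    exact ⟨δ, hδ⟩

end Paper
end
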